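/- arXiv:2501.12808 — 3 statements merged into one kernel-verified Lean document; each statement's English description precedes it below -/
import Mathlib

section
/- Let G be a locally compact second countable, compactly generated group with compact symmetric generating set S, and let μ be a cohomologically adapted probability measure on G. Let 1 < q ≤ 2 and d > 0, let E be a real Banach space satisfying the (q,d)-uniform smoothness inequality with duality map, let π : G → O(E) be a strongly continuous isometric linear representation, and let b ∈ Z¹(G, π) be a μ-harmonic 1-cocycle. Then for every n ≥ 1: ∫_G ‖b(g)‖^q dμ^{*n}(g) ≤ (d(n−1) + 1) · ∫_G ‖b(g)‖^q dμ(g). -/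
open Pointwise
open scoped ENNReal

noncomputable section

/-- The word length of `g` with respect to a generating set `S`:
`|g|_S = min {n : g ∈ Sⁿ}`. -/
def wordLength {G : Type*} [Monoid G] (S : Set G) (g : G) : ℕ :=
  sInf {n : ℕ | g ∈ S ^ n}

/-- The `n`-fold convolution power `μ^{*n}` of a measure on a group
(with `μ^{*0} = δ₁`). -/
def convPow {G : Type*} [Monoid G] [MeasurableSpace G]
    (μ : MeasureTheory.Measure G) : ℕ → MeasureTheory.Measure G
  | 0 => MeasureTheory.Measure.dirac 1
  | n + 1 => MeasureTheory.Measure.map (fun q : G × G => q.1 * q.2)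
      ((convPow μ n).prod μ)

/-- A Borel probability measure `μ` on a locally compact compactly generated group `G`
with compact symmetric generating set `S` is cohomologically adapted if it is symmetric,
absolutely continuous with respect to the Haar measure, its support contains `S`, its
density is essentially bounded below by a positive constant on `S`, and it has finite
`p`-moments for all `1 ≤ p < ∞`. -/
structure CohomologicallyAdapted {G : Type*} [Group G] [TopologicalSpace G]
    [IsTopologicalGroup G] [LocallyCompactSpace G] [MeasurableSpace G] [BorelSpace G]
    (S : Set G) (μ : MeasureTheory.Measure G) : Prop where
  isProb : MeasureTheory.IsProbabilityMeasure μ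
  symmetric : MeasureTheory.Measure.map (fun g => g⁻¹) μ = μ
  absCont : μ.AbsolutelyContinuous MeasureTheory.Measure.haar
  suppContains : ∀ g ∈ S, ∀ U : Set G, IsOpen U → g ∈ U → 0 < μ U
  densityBounded : ∃ ε : ℝ≥0∞, 0 < ε ∧
    ∀ᵐ x ∂((MeasureTheory.Measure.haar : MeasureTheory.Measure G).restrict S),
      ε ≤ μ.rnDeriv MeasureTheory.Measure.haar x
  finiteMoments : ∀ p : ℝ, 1 ≤ p →
    MeasureTheory.Integrable (fun g => (wordLength S g : ℝ) ^ p) μ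

open Classical in
/-- `x^{*_p} = ‖x‖^{p−2}·Jx` for `x ≠ 0`, and `0^{*_p} = 0`. -/
def starMap {E : Type*} [NormedAddCommGroup E] [NormedSpace ℝ E]
    (J : E → StrongDual ℝ E) (p : ℝ) (x : E) : StrongDual ℝ E :=
  if x = 0 then 0 else ‖x‖ ^ (p - 2) • J x

/-- `E` satisfies the `(q,d)`-uniform smoothness inequality with duality map `J`:
`J` is continuous, `⟨x, Jx⟩ = ‖x‖²`, `‖Jx‖ = ‖x‖` and
`‖x+y‖^q ≤ ‖x‖^q + q⟨y, x^{*_q}⟩ + d‖y‖^q`. -/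
structure IsSmoothDualityMap {E : Type*} [NormedAddCommGroup E] [NormedSpace ℝ E]
    (q d : ℝ) (J : E → StrongDual ℝ E) : Prop where
  continuous : Continuous J
  pairing : ∀ x : E, J x x = ‖x‖ ^ 2
  norm_eq : ∀ x : E, ‖J x‖ = ‖x‖
  ineq : ∀ x y : E, ‖x + y‖ ^ q ≤ ‖x‖ ^ q + q * starMap J q x y + d * ‖y‖ ^ q


/-! Since `μ^{*(n+1)} = μ^{*n} ∗ μ` and `b(gh) = b(g) + π(g) b(h)`, apply the smoothness
inequality with `x = b(g)`, `y = π(g) b(h)` and integrate in `h`: the linear term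
`⟨π(g) b(h), b(g)^{*_q}⟩` integrates to zero because `b` is `μ`-harmonic, so every convolution
step adds at most `d ∫ ‖b‖^q dμ`. The linear bound `‖b(g)‖ ≤ C |g|_S` and the finite moments
of `μ` put `b` in `L^q(μ^{*n})`, which makes all these integrals meaningful. -/

open MeasureTheory

def IsCocycle {G E : Type*} [Monoid G] [NormedAddCommGroup E] [NormedSpace ℝ E]
    (π : G →* (E ≃ₗᵢ[ℝ] E)) (b : G → E) : Prop :=
  ∀ g h : G, b (g * h) = b g + π g (b h)

namespace IsCocycle

variable {G E : Type*} [Monoid G] [NormedAddCommGroup E] [NormedSpace ℝ E]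
  {π : G →* (E ≃ₗᵢ[ℝ] E)} {b : G → E}

theorem map_one (hb : IsCocycle π b) : b 1 = 0 := by
  simpa using hb 1 1

theorem norm_mul_le (hb : IsCocycle π b) (g h : G) : ‖b (g * h)‖ ≤ ‖b g‖ + ‖b h‖ := by
  simpa only [hb g h, LinearIsometryEquiv.norm_map] using norm_add_le (b g) (π g (b h))

theorem norm_le_of_mem_pow (hb : IsCocycle π b) {S : Set G} {C : ℝ}
    (hC : ∀ s ∈ S, ‖b s‖ ≤ C) {n : ℕ} {g : G} (hg : g ∈ S ^ n) : ‖b g‖ ≤ n * C := by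
  induction n generalizing g with
  | zero =>
    rw [pow_zero, Set.mem_one] at hg
    simp [hg, hb.map_one]
  | succ n ih =>
    obtain ⟨h, hh, s, hs, rfl⟩ := Set.mem_mul.mp (pow_succ S n ▸ hg)
    calc ‖b (h * s)‖ ≤ ‖b h‖ + ‖b s‖ := hb.norm_mul_le h s
      _ ≤ n * C + C := add_le_add (ih hh) (hC s hs)
      _ = (n + 1 : ℕ) * C := by push_cast; ring

theorem exists_norm_le_wordLength [TopologicalSpace G] (hb : IsCocycle π b)
    (hbc : Continuous b) {S : Set G} (hS : IsCompact S) (hSgen : ∀ g : G, ∃ n : ℕ, g ∈ S ^ n) :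
    ∃ C : ℝ, 0 ≤ C ∧ ∀ g : G, ‖b g‖ ≤ C * wordLength S g := by
  obtain ⟨C, hC⟩ := hS.exists_bound_of_continuousOn hbc.continuousOn
  refine ⟨max C 0, le_max_right C 0, fun g => ?_⟩
  rw [mul_comm]
  exact hb.norm_le_of_mem_pow (fun s hs => (hC s hs).trans (le_max_left C 0))
    (Nat.sInf_mem (hSgen g))

theorem memLp_of_integrable_wordLength_rpow [TopologicalSpace G] [SecondCountableTopology G]
    [MeasurableSpace G] [OpensMeasurableSpace G] {μ : Measure G} (hb : IsCocycle π b)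
    (hbc : Continuous b) {S : Set G} (hS : IsCompact S)
    (hSgen : ∀ g : G, ∃ n : ℕ, g ∈ S ^ n) {q : ℝ} (hq : 0 < q)
    (hmom : Integrable (fun g => (wordLength S g : ℝ) ^ q) μ) :
    MemLp b (ENNReal.ofReal q) μ := by
  obtain ⟨C, hC0, hC⟩ := hb.exists_norm_le_wordLength hbc hS hSgen
  rw [← integrable_norm_rpow_iff hbc.aestronglyMeasurable (by simpa using hq) (by simp),
    ENNReal.toReal_ofReal hq.le]
  refine (hmom.const_mul (C ^ q)).mono'
    (hbc.norm.rpow_const fun _ => Or.inr hq.le).aestronglyMeasurable (ae_of_all _ fun g => ?_)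
  rw [Real.norm_of_nonneg (by positivity), ← Real.mul_rpow hC0 (by positivity)]
  exact Real.rpow_le_rpow (norm_nonneg _) (hC g) hq.le

end IsCocycle

section ConvolutionPowers

variable {G : Type*} [Monoid G] [MeasurableSpace G] {μ : Measure G}

theorem convPow_succ (μ : Measure G) (n : ℕ) : convPow μ (n + 1) = convPow μ n ∗ₘ μ := rfl

theorem convPow_one [MeasurableMul₂ G] [SFinite μ] : convPow μ 1 = μ :=
  Measure.dirac_one_mconv μ

instance [MeasurableMul₂ G] [IsProbabilityMeasure μ] (n : ℕ) :
    IsProbabilityMeasure (convPow μ n) := by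
  induction n with
  | zero => exact Measure.dirac.isProbabilityMeasure
  | succ n ih => rw [convPow_succ]; infer_instance

end ConvolutionPowers

theorem MeasureTheory.MemLp.integrable_norm_rpow_ofReal {α F : Type*} [MeasurableSpace α]
    {μ : Measure α} [IsFiniteMeasure μ] [NormedAddCommGroup F] {f : α → F} {q : ℝ} (hq : 0 ≤ q)
    (hf : MemLp f (ENNReal.ofReal q) μ) : Integrable (fun x => ‖f x‖ ^ q) μ := by
  simpa [ENNReal.toReal_ofReal hq] using hf.integrable_norm_rpow'

theorem IsSmoothDualityMap.integral_norm_add_rpow_le {E Ω : Type*} [NormedAddCommGroup E]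
    [NormedSpace ℝ E] [CompleteSpace E] [MeasurableSpace Ω] {μ : Measure Ω}
    [IsProbabilityMeasure μ] {q d : ℝ} {J : E → StrongDual ℝ E} (hJ : IsSmoothDualityMap q d J)
    (x : E) {Y : Ω → E} (hY : Integrable Y μ) (hYq : Integrable (fun ω => ‖Y ω‖ ^ q) μ)
    (hmean : ∫ ω, Y ω ∂μ = 0) :
    ∫ ω, ‖x + Y ω‖ ^ q ∂μ ≤ ‖x‖ ^ q + d * ∫ ω, ‖Y ω‖ ^ q ∂μ := by
  have hlin : Integrable (fun ω => starMap J q x (Y ω)) μ := (starMap J q x).integrable_comp hY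
  have hlin_zero : ∫ ω, starMap J q x (Y ω) ∂μ = 0 := by
    rw [(starMap J q x).integral_comp_comm hY, hmean, map_zero]
  have hconst : Integrable (fun ω => ‖x‖ ^ q + q * starMap J q x (Y ω)) μ :=
    (integrable_const _).add (hlin.const_mul q)
  calc ∫ ω, ‖x + Y ω‖ ^ q ∂μ
      ≤ ∫ ω, (‖x‖ ^ q + q * starMap J q x (Y ω) + d * ‖Y ω‖ ^ q) ∂μ :=
        integral_mono_of_nonneg (ae_of_all _ fun ω => by positivity)
          (hconst.add (hYq.const_mul d)) (ae_of_all _ fun ω => hJ.ineq x (Y ω))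
    _ = ‖x‖ ^ q + d * ∫ ω, ‖Y ω‖ ^ q ∂μ := by
        rw [integral_add hconst (hYq.const_mul d), integral_add (integrable_const _)
          (hlin.const_mul q), integral_const_mul, integral_const_mul, hlin_zero, integral_const]
        simp

namespace IsCocycle

variable {G E : Type*} [Monoid G] [TopologicalSpace G] [ContinuousMul G]
  [SecondCountableTopology G] [MeasurableSpace G] [BorelSpace G]
  [NormedAddCommGroup E] [NormedSpace ℝ E] {π : G →* (E ≃ₗᵢ[ℝ] E)} {b : G → E}
  {p : ℝ≥0∞} {ν μ : Measure G}

theorem memLp_mconv [IsFiniteMeasure ν] [IsFiniteMeasure μ] (hb : IsCocycle π b)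
    (hbc : Continuous b) (hbν : MemLp b p ν) (hbμ : MemLp b p μ) : MemLp b p (ν ∗ₘ μ) := by
  rw [Measure.mconv, memLp_map_measure_iff hbc.aestronglyMeasurable (by fun_prop)]
  refine ((hbν.norm.comp_fst μ).add (hbμ.norm.comp_snd ν)).of_le
    (hbc.comp continuous_mul).aestronglyMeasurable (ae_of_all _ fun z => ?_)
  show ‖b (z.1 * z.2)‖ ≤ ‖‖b z.1‖ + ‖b z.2‖‖
  rw [Real.norm_of_nonneg (add_nonneg (norm_nonneg _) (norm_nonneg _))]
  exact hb.norm_mul_le z.1 z.2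

theorem memLp_convPow [IsProbabilityMeasure μ] (hb : IsCocycle π b) (hbc : Continuous b)
    (hbμ : MemLp b p μ) {n : ℕ} (hn : 1 ≤ n) : MemLp b p (convPow μ n) := by
  induction n, hn using Nat.le_induction with
  | base => rwa [convPow_one]
  | succ n _ ih => exact hb.memLp_mconv hbc ih hbμ

theorem integral_norm_rpow_mconv_le [CompleteSpace E] [IsProbabilityMeasure ν]
    [IsProbabilityMeasure μ] (hb : IsCocycle π b) (hbc : Continuous b) {q d : ℝ} (hq : 1 ≤ q)
    {J : E → StrongDual ℝ E} (hJ : IsSmoothDualityMap q d J)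
    (hbν : MemLp b (ENNReal.ofReal q) ν) (hbμ : MemLp b (ENNReal.ofReal q) μ)
    (hharm : ∫ g, b g ∂μ = 0) :
    ∫ g, ‖b g‖ ^ q ∂(ν ∗ₘ μ) ≤ ∫ g, ‖b g‖ ^ q ∂ν + d * ∫ g, ‖b g‖ ^ q ∂μ := by
  have hq0 : 0 ≤ q := zero_le_one.trans hq
  have hbμ1 : Integrable b μ := hbμ.integrable (by simpa using hq)
  have hbμq := hbμ.integrable_norm_rpow_ofReal hq0
  have hbνq := hbν.integrable_norm_rpow_ofReal hq0
  have hmconv := (hb.memLp_mconv hbc hbν hbμ).integrable_norm_rpow_ofReal hq0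
  have hprod : Integrable (fun z : G × G => ‖b (z.1 * z.2)‖ ^ q) (ν.prod μ) :=
    (integrable_map_measure (hbc.norm.rpow_const fun _ => Or.inr hq0).aestronglyMeasurable
      (by fun_prop)).mp hmconv
  have hstep (g : G) : ∫ h, ‖b (g * h)‖ ^ q ∂μ ≤ ‖b g‖ ^ q + d * ∫ h, ‖b h‖ ^ q ∂μ := by
    simpa only [hb g, LinearIsometryEquiv.norm_map] using
      hJ.integral_norm_add_rpow_le (b g) ((π g).integrable_comp_iff.mpr hbμ1)
        (by simpa only [LinearIsometryEquiv.norm_map] using hbμq)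
        (((π g).toLinearIsometry.integral_comp_comm b).trans (by simp [hharm]))
  calc ∫ g, ‖b g‖ ^ q ∂(ν ∗ₘ μ) = ∫ g, ∫ h, ‖b (g * h)‖ ^ q ∂μ ∂ν := integral_mconv hmconv
    _ ≤ ∫ g, (‖b g‖ ^ q + d * ∫ h, ‖b h‖ ^ q ∂μ) ∂ν :=
        integral_mono hprod.integral_prod_left (hbνq.add (integrable_const _)) hstep
    _ = ∫ g, ‖b g‖ ^ q ∂ν + d * ∫ g, ‖b g‖ ^ q ∂μ := by
        rw [integral_add hbνq (integrable_const _), integral_const]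
        simp

end IsCocycle

theorem harmonic_cocycle_growth_uniformly_smooth_general
    {G : Type*} [Group G] [TopologicalSpace G] [IsTopologicalGroup G]
    [LocallyCompactSpace G] [SecondCountableTopology G]
    [MeasurableSpace G] [BorelSpace G]
    (S : Set G) (hScpt : IsCompact S)
    (hSgen : ∀ g : G, ∃ n : ℕ, g ∈ S ^ n)
    (μ : MeasureTheory.Measure G) (hμ : CohomologicallyAdapted S μ)
    (q d : ℝ) (hq1 : 1 < q)
    {E : Type*} [NormedAddCommGroup E] [NormedSpace ℝ E] [CompleteSpace E]
    (hE : ∃ J : E → StrongDual ℝ E, IsSmoothDualityMap q d J)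
    (π : G →* (E ≃ₗᵢ[ℝ] E))
    (b : G → E) (hb : Continuous b)
    (hcoc : ∀ g h : G, b (g * h) = b g + π g (b h))
    (hharm : ∫ g, b g ∂μ = 0) :
    ∀ n : ℕ, 1 ≤ n →
      ∫ g, ‖b g‖ ^ q ∂(convPow μ n)
        ≤ (d * ((n : ℝ) - 1) + 1) * ∫ g, ‖b g‖ ^ q ∂μ := by
  intro n hn
  obtain ⟨J, hJ⟩ := hE
  have := hμ.isProb
  have hcoc : IsCocycle π b := hcoc
  have hbμ : MemLp b (ENNReal.ofReal q) μ :=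
    hcoc.memLp_of_integrable_wordLength_rpow hb hScpt hSgen (by linarith)
      (hμ.finiteMoments q hq1.le)
  induction n, hn using Nat.le_induction with
  | base => simp [convPow_one]
  | succ n hn ih =>
    have hstep := hcoc.integral_norm_rpow_mconv_le hb hq1.le hJ
      (hcoc.memLp_convPow hb hbμ hn) hbμ hharm
    rw [convPow_succ]
    push_cast
    linarith

theorem harmonic_cocycle_growth_uniformly_smooth
    {G : Type*} [Group G] [TopologicalSpace G] [IsTopologicalGroup G]
    [LocallyCompactSpace G] [SecondCountableTopology G]
    [MeasurableSpace G] [BorelSpace G]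
    (S : Set G) (hScpt : IsCompact S) (hSsymm : S⁻¹ = S)
    (hSgen : ∀ g : G, ∃ n : ℕ, g ∈ S ^ n)
    (μ : MeasureTheory.Measure G) (hμ : CohomologicallyAdapted S μ)
    (q d : ℝ) (hq1 : 1 < q) (hq2 : q ≤ 2) (hd : 0 < d)
    {E : Type*} [NormedAddCommGroup E] [NormedSpace ℝ E] [CompleteSpace E]
    (hE : ∃ J : E → StrongDual ℝ E, IsSmoothDualityMap q d J)
    (π : G →* (E ≃ₗᵢ[ℝ] E)) (hπ : ∀ x : E, Continuous fun g : G => π g x)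
    (b : G → E) (hb : Continuous b)
    (hcoc : ∀ g h : G, b (g * h) = b g + π g (b h))
    (hharm : ∫ g, b g ∂μ = 0) :
    ∀ n : ℕ, 1 ≤ n →
      ∫ g, ‖b g‖ ^ q ∂(convPow μ n)
        ≤ (d * ((n : ℝ) - 1) + 1) * ∫ g, ‖b g‖ ^ q ∂μ :=
  harmonic_cocycle_growth_uniformly_smooth_general S hScpt hSgen μ hμ q d hq1 hE π b hb hcoc hharm
end
end

section
/- Let G be a locally compact second countable, compactly generated group with compact symmetric generating set S, and let μ and ν be cohomologically adapted probability measures on G. Let p > 1 and c > 0, let E be a real Banach space satisfying the (p,c)-uniform convexity inequality with duality map J, let π : G → O(E) be a strongly continuous isometric linear representation, and let b ∈ Z¹(G, π) be a 1-cocycle. Then ∫_G ‖b(g)‖^p d(μ∗ν)(g) ≥ c·∫_G ‖b(g)‖^p dμ(g) + ∫_G ‖b(g)‖^p dν(g) − p·⟨ ∫_G b(g) dμ(g), ∫_G (b(h))^{*_p} dν(h) ⟩, where μ∗ν is the convolution of μ and ν, x^{*_p} := ‖x‖^{p−2}·Jx (with 0^{*_p} = 0), and ⟨·,·⟩ is the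 pairing between E and its dual E*. -/
open Pointwise
open scoped ENNReal

noncomputable section

/-- Convolution of two measures on a group: the pushforward of the product measure
under multiplication. -/
def mconv {G : Type*} [Monoid G] [MeasurableSpace G]
    (μ ν : MeasureTheory.Measure G) : MeasureTheory.Measure G :=
  MeasureTheory.Measure.map (fun q : G × G => q.1 * q.2) (μ.prod ν)

/-- `E` satisfies the `(p,c)`-uniform convexity inequality with duality map `J`:
`J` is continuous, `⟨x, Jx⟩ = ‖x‖²`, `‖Jx‖ = ‖x‖` and
`‖x+y‖^p ≥ ‖x‖^p + p⟨y, x^{*_p}⟩ + c‖y‖^p`. -/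
structure IsConvexDualityMap {E : Type*} [NormedAddCommGroup E] [NormedSpace ℝ E]
    (p c : ℝ) (J : E → StrongDual ℝ E) : Prop where
  continuous : Continuous J
  pairing : ∀ x : E, J x x = ‖x‖ ^ 2
  norm_eq : ∀ x : E, ‖J x‖ = ‖x‖
  ineq : ∀ x y : E, ‖x‖ ^ p + p * starMap J p x y + c * ‖y‖ ^ p ≤ ‖x + y‖ ^ p


/-!
Since `μ` is symmetric, `μ ∗ ν` is the law of `g⁻¹h` for `(g, h) ∼ μ × ν`, and the cocycle identity
gives `‖b(g⁻¹h)‖ = ‖b(h) − b(g)‖`. Integrating the pointwise inequality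
`‖y − x‖^p ≥ ‖y‖^p − p⟨x, y^{*_p}⟩ + c‖x‖^p` against `μ × ν` and splitting the pairing term by
Fubini yields the claim. The finite moments of the word length, together with the linear bound
`‖b(g)‖ ≤ M |g|_S`, make every integral involved finite.
-/

open MeasureTheory Filter Topology

section StarMap

variable {E : Type*} [NormedAddCommGroup E] [NormedSpace ℝ E] {J : E → StrongDual ℝ E} {p c : ℝ}

lemma norm_starMap (hJ : ∀ x, ‖J x‖ = ‖x‖) (hp : p ≠ 1) (x : E) :
    ‖starMap J p x‖ = ‖x‖ ^ (p - 1) := by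
  rcases eq_or_ne x 0 with rfl | hx
  · simp [starMap, Real.zero_rpow (sub_ne_zero.2 hp)]
  · have hx' : 0 < ‖x‖ := norm_pos_iff.2 hx
    rw [starMap, if_neg hx, norm_smul, hJ, Real.norm_of_nonneg (by positivity),
      ← Real.rpow_add_one hx'.ne']
    ring_nf

lemma continuous_starMap (hJc : Continuous J) (hJ : ∀ x, ‖J x‖ = ‖x‖) (hp : 1 < p) :
    Continuous (starMap J p) := by
  refine continuous_iff_continuousAt.2 fun x => ?_
  rcases eq_or_ne x 0 with rfl | hx
  · have hpow : Tendsto (fun y : E => ‖y‖ ^ (p - 1)) (𝓝 0) (𝓝 0) := by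
      have h : Tendsto (fun y : E => ‖y‖ ^ (p - 1)) (𝓝 0) (𝓝 (‖(0 : E)‖ ^ (p - 1))) :=
        (continuous_norm.rpow_const fun _ => Or.inr (by linarith)).tendsto 0
      rwa [norm_zero, Real.zero_rpow (by linarith)] at h
    rw [ContinuousAt, starMap, if_pos rfl, tendsto_zero_iff_norm_tendsto_zero]
    simpa only [norm_starMap hJ hp.ne'] using hpow
  · have hformula : (fun y => ‖y‖ ^ (p - 2) • J y) =ᶠ[𝓝 x] starMap J p := by
      filter_upwards [isOpen_ne.mem_nhds hx] with y hy
      rw [starMap, if_neg hy]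
    exact (((continuous_norm.continuousAt.rpow_const (Or.inl (norm_ne_zero_iff.2 hx))).smul
      hJc.continuousAt)).congr hformula

lemma IsConvexDualityMap.le_norm_sub_rpow (hJ : IsConvexDualityMap p c J) (x y : E) :
    c * ‖x‖ ^ p + ‖y‖ ^ p - p * starMap J p y x ≤ ‖y - x‖ ^ p := by
  have h := hJ.ineq y (-x)
  rw [norm_neg, map_neg, ← sub_eq_add_neg] at h
  linarith

end StarMap

section Lp

variable {X E : Type*} [MeasurableSpace X] [NormedAddCommGroup E] {κ : Measure X} {f : X → E}

lemma integrable_norm_rpow_of_memLp [IsFiniteMeasure κ] {q : ℝ} (hq : 0 ≤ q)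
    (hf : MemLp f (ENNReal.ofReal q) κ) : Integrable (fun x => ‖f x‖ ^ q) κ := by
  have h := hf.integrable_norm_rpow'
  rwa [ENNReal.toReal_ofReal hq] at h

lemma memLp_of_norm_le_mul_of_integrable_rpow {w : X → ℝ} {M q : ℝ}
    (hf : AEStronglyMeasurable f κ) (hw : Integrable (fun x => w x ^ q) κ)
    (hw0 : ∀ x, 0 ≤ w x) (hM : 0 ≤ M) (hq : 0 < q) (hfw : ∀ x, ‖f x‖ ≤ M * w x) :
    MemLp f (ENNReal.ofReal q) κ := by
  rw [← integrable_norm_rpow_iff hf (by simpa using hq) ENNReal.ofReal_ne_top,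
    ENNReal.toReal_ofReal hq.le]
  refine (hw.const_mul (M ^ q)).mono' (hf.norm.aemeasurable.pow_const q).aestronglyMeasurable
    (ae_of_all _ fun x => ?_)
  rw [Real.norm_of_nonneg (by positivity), ← Real.mul_rpow hM (hw0 x)]
  exact Real.rpow_le_rpow (norm_nonneg _) (hfw x) hq.le

end Lp

section Integration

variable {X Y E : Type*} [MeasurableSpace X] [MeasurableSpace Y]
  [NormedAddCommGroup E] [NormedSpace ℝ E] {J : E → StrongDual ℝ E} {p c : ℝ}
  {μ : Measure X} {ν : Measure Y}

lemma integrable_starMap_comp [IsFiniteMeasure ν] (hJc : Continuous J)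
    (hJ : ∀ x, ‖J x‖ = ‖x‖) (hp : 1 < p) {g : Y → E} (hg : MemLp g (ENNReal.ofReal p) ν) :
    Integrable (fun y => starMap J p (g y)) ν := by
  have hg' : Integrable (fun y => ‖g y‖ ^ (p - 1)) ν :=
    integrable_norm_rpow_of_memLp (by linarith)
      (hg.mono_exponent (ENNReal.ofReal_le_ofReal (by linarith)))
  exact hg'.mono' ((continuous_starMap hJc hJ hp).comp_aestronglyMeasurable hg.1)
    (ae_of_all _ fun y => (norm_starMap hJ hp.ne' (g y)).le)

theorem IsConvexDualityMap.le_integral_norm_sub_rpow [CompleteSpace E]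
    [IsProbabilityMeasure μ] [IsProbabilityMeasure ν] (hJ : IsConvexDualityMap p c J)
    (hp : 1 < p) {f : X → E} {g : Y → E}
    (hf : MemLp f (ENNReal.ofReal p) μ) (hg : MemLp g (ENNReal.ofReal p) ν) :
    c * (∫ x, ‖f x‖ ^ p ∂μ) + (∫ y, ‖g y‖ ^ p ∂ν)
        - p * (∫ y, starMap J p (g y) ∂ν) (∫ x, f x ∂μ)
      ≤ ∫ z, ‖g z.2 - f z.1‖ ^ p ∂(μ.prod ν) := by
  have hp0 : 0 ≤ p := by linarith
  have hf1 : Integrable f μ := hf.integrable (ENNReal.one_le_ofReal.2 hp.le)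
  have hgstar := integrable_starMap_comp hJ.continuous hJ.norm_eq hp hg
  have hfp := integrable_norm_rpow_of_memLp hp0 (hf.comp_fst ν)
  have hgp := integrable_norm_rpow_of_memLp hp0 (hg.comp_snd μ)
  have hpair : Integrable (fun z : X × Y => starMap J p (g z.2) (f z.1)) (μ.prod ν) :=
    hf1.op_fst_snd (op := fun x φ => φ x)
      (ContinuousLinearMap.apply ℝ ℝ).continuous₂ ⟨1, fun x φ => by
        simpa [mul_comm] using φ.le_opNorm x⟩ hgstar
  have hsum : Integrable (fun z : X × Y => c * ‖f z.1‖ ^ p + ‖g z.2‖ ^ p) (μ.prod ν) :=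
    (hfp.const_mul c).add hgp
  have hdiff : Integrable (fun z : X × Y => ‖g z.2 - f z.1‖ ^ p) (μ.prod ν) :=
    integrable_norm_rpow_of_memLp hp0 ((hg.comp_snd μ).sub (hf.comp_fst ν))
  have hfubini : ∫ z, starMap J p (g z.2) (f z.1) ∂(μ.prod ν)
      = (∫ y, starMap J p (g y) ∂ν) (∫ x, f x ∂μ) :=
    integral_prod_bilin (ContinuousLinearMap.apply ℝ ℝ) hf1 hgstar
  calc _ = ∫ z, (c * ‖f z.1‖ ^ p + ‖g z.2‖ ^ p - p * starMap J p (g z.2) (f z.1))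
          ∂(μ.prod ν) := by
        rw [integral_sub hsum (hpair.const_mul p), integral_add (hfp.const_mul c) hgp,
          integral_const_mul, integral_const_mul, integral_fun_fst (fun x => ‖f x‖ ^ p),
          integral_fun_snd (fun y => ‖g y‖ ^ p), hfubini]
        simp
    _ ≤ _ := integral_mono (hsum.sub (hpair.const_mul p)) hdiff
        fun z => hJ.le_norm_sub_rpow (f z.1) (g z.2)

end Integration

section Cocycle

variable {G E : Type*} [Group G] [NormedAddCommGroup E] [NormedSpace ℝ E]
  {π : G →* (E ≃ₗᵢ[ℝ] E)} {b : G → E}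

lemma cocycle_one (hcoc : ∀ g h, b (g * h) = b g + π g (b h)) : b 1 = 0 := by
  simpa using hcoc 1 1

lemma norm_cocycle_inv_mul (hcoc : ∀ g h, b (g * h) = b g + π g (b h)) (g h : G) :
    ‖b (g⁻¹ * h)‖ = ‖b h - b g‖ := by
  have hinv : b g⁻¹ = -π g⁻¹ (b g) := by
    have h := hcoc g⁻¹ g
    rw [inv_mul_cancel, cocycle_one hcoc] at h
    exact eq_neg_of_add_eq_zero_left h.symm
  rw [hcoc, hinv, neg_add_eq_sub, ← map_sub, LinearIsometryEquiv.norm_map]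

lemma norm_cocycle_le_mul_wordLength (hcoc : ∀ g h, b (g * h) = b g + π g (b h)) {S : Set G}
    (hS : ∀ g, ∃ n : ℕ, g ∈ S ^ n) {M : ℝ} (hM : ∀ s ∈ S, ‖b s‖ ≤ M) (g : G) :
    ‖b g‖ ≤ M * wordLength S g := by
  have hpow : ∀ n : ℕ, ∀ g ∈ S ^ n, ‖b g‖ ≤ M * n := by
    intro n
    induction n with
    | zero => simp [cocycle_one hcoc]
    | succ n ih =>
      rintro _ ⟨a, ha, s, hs, rfl⟩
      calc ‖b (a * s)‖ ≤ ‖b a‖ + ‖b s‖ := by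
            rw [hcoc, ← LinearIsometryEquiv.norm_map (π a) (b s)]; exact norm_add_le _ _
        _ ≤ M * n + M := add_le_add (ih a ha) (hM s hs)
        _ = M * ↑(n + 1) := by push_cast; ring
  exact hpow _ g (Nat.sInf_mem (hS g))

end Cocycle

lemma mconv_eq_map_inv_mul {G : Type*} [Group G] [MeasurableSpace G] [MeasurableMul₂ G]
    [MeasurableInv G] {μ ν : Measure G} [SFinite μ] [SFinite ν] (hμ : μ.map (·⁻¹) = μ) :
    mconv μ ν = (μ.prod ν).map fun z => z.1⁻¹ * z.2 := by
  have hprod := Measure.map_prod_map μ ν measurable_inv measurable_id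
  rw [hμ, Measure.map_id] at hprod
  conv_lhs => rw [mconv, hprod]
  rw [Measure.map_map measurable_mul (measurable_inv.prodMap measurable_id)]
  rfl

theorem cocycle_convolution_inequality_general
    {G : Type*} [Group G] [TopologicalSpace G] [IsTopologicalGroup G]
    [LocallyCompactSpace G] [SecondCountableTopology G]
    [MeasurableSpace G] [BorelSpace G]
    (S : Set G) (hScpt : IsCompact S)
    (hSgen : ∀ g : G, ∃ n : ℕ, g ∈ S ^ n)
    (μ ν : MeasureTheory.Measure G)
    (hμ : CohomologicallyAdapted S μ) (hν : CohomologicallyAdapted S ν)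
    (p c : ℝ) (hp : 1 < p)
    {E : Type*} [NormedAddCommGroup E] [NormedSpace ℝ E] [CompleteSpace E]
    (J : E → StrongDual ℝ E) (hJ : IsConvexDualityMap p c J)
    (π : G →* (E ≃ₗᵢ[ℝ] E))
    (b : G → E) (hb : Continuous b)
    (hcoc : ∀ g h : G, b (g * h) = b g + π g (b h)) :
    c * (∫ g, ‖b g‖ ^ p ∂μ) + (∫ g, ‖b g‖ ^ p ∂ν)
        - p * (∫ h, starMap J p (b h) ∂ν) (∫ g, b g ∂μ)
      ≤ ∫ g, ‖b g‖ ^ p ∂(mconv μ ν) := by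
  have := hμ.isProb
  have := hν.isProb
  obtain ⟨C, hC⟩ := hScpt.exists_bound_of_continuousOn hb.continuousOn
  have hword (g : G) : ‖b g‖ ≤ max C 0 * wordLength S g :=
    norm_cocycle_le_mul_wordLength hcoc hSgen (fun s hs => (hC s hs).trans (le_max_left _ _)) g
  have hLp {κ : Measure G} (hκ : CohomologicallyAdapted S κ) :
      MemLp b (ENNReal.ofReal p) κ :=
    memLp_of_norm_le_mul_of_integrable_rpow hb.aestronglyMeasurable (hκ.finiteMoments p hp.le)
      (fun _ => Nat.cast_nonneg _) (le_max_right _ _) (by linarith) hword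
  calc _ ≤ ∫ z, ‖b z.2 - b z.1‖ ^ p ∂(μ.prod ν) :=
        hJ.le_integral_norm_sub_rpow hp (hLp hμ) (hLp hν)
    _ = ∫ z, ‖b (z.1⁻¹ * z.2)‖ ^ p ∂(μ.prod ν) := by simp_rw [norm_cocycle_inv_mul hcoc]
    _ = ∫ g, ‖b g‖ ^ p ∂(mconv μ ν) := by
      rw [mconv_eq_map_inv_mul hμ.symmetric, integral_map (by fun_prop)
        (hb.norm.rpow_const fun _ => Or.inr (by linarith)).aestronglyMeasurable]

theorem cocycle_convolution_inequality
    {G : Type*} [Group G] [TopologicalSpace G] [IsTopologicalGroup G]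
    [LocallyCompactSpace G] [SecondCountableTopology G]
    [MeasurableSpace G] [BorelSpace G]
    (S : Set G) (hScpt : IsCompact S) (hSsymm : S⁻¹ = S)
    (hSgen : ∀ g : G, ∃ n : ℕ, g ∈ S ^ n)
    (μ ν : MeasureTheory.Measure G)
    (hμ : CohomologicallyAdapted S μ) (hν : CohomologicallyAdapted S ν)
    (p c : ℝ) (hp : 1 < p) (hc : 0 < c)
    {E : Type*} [NormedAddCommGroup E] [NormedSpace ℝ E] [CompleteSpace E]
    (J : E → StrongDual ℝ E) (hJ : IsConvexDualityMap p c J)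
    (π : G →* (E ≃ₗᵢ[ℝ] E)) (hπ : ∀ x : E, Continuous fun g : G => π g x)
    (b : G → E) (hb : Continuous b)
    (hcoc : ∀ g h : G, b (g * h) = b g + π g (b h)) :
    c * (∫ g, ‖b g‖ ^ p ∂μ) + (∫ g, ‖b g‖ ^ p ∂ν)
        - p * (∫ h, starMap J p (b h) ∂ν) (∫ g, b g ∂μ)
      ≤ ∫ g, ‖b g‖ ^ p ∂(mconv μ ν) :=
  cocycle_convolution_inequality_general S hScpt hSgen μ ν hμ hν p c hp J hJ π b hb hcoc
end
end

section
/- Let G be a locally compact second countable, compactly generated group with compact symmetric generating set S, and let μ and ν be cohomologically adapted probability measures on G. Let H be a real Hilbert space, π : G → O(H) a strongly continuous representation by surjective linear isometries, and b ∈ Z¹(G, π) a 1-cocycle. Then ∫_G ‖b(g)‖² d(μ∗ν)(g) = ∫_G ‖b(g)‖² dμ(g) + ∫_G ‖b(g)‖² dν(g) − 2·⟪ ∫_G b(g) dμ(g), ∫_G b(g) dν(g) ⟫, where μ∗ν is the convolution of μ and ν and ⟪·,·⟫ is the inner product of H. -/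
/-!
Since `π g` is an isometry and `b g = -π g (b g⁻¹)`, the cocycle relation
`b (g * h) = b g + π g (b h)` gives pointwise
`‖b (g * h)‖² = ‖b g‖² + ‖b h‖² - 2 ⟪b g⁻¹, b h⟫`.
Integrating against `μ × ν`, the cross term factors as `⟪∫ b (g⁻¹) dμ, ∫ b dν⟫`, and
the symmetry of `μ` turns its first factor into `∫ b dμ`. Every integral involved is finite
because `‖b‖` grows at most linearly in the word length, whose moments are finite.
-/

open Pointwise
open scoped ENNReal

noncomputable section

open MeasureTheory
open scoped RealInnerProductSpace

def IsOneCocycle {G R E : Type*} [Group G] [Semiring R] [NormedAddCommGroup E] [Module R E]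
    (π : G →* (E ≃ₗᵢ[R] E)) (b : G → E) : Prop :=
  ∀ g h : G, b (g * h) = b g + π g (b h)

namespace IsOneCocycle

section NormedGroup

variable {G R E : Type*} [Group G] [Semiring R] [NormedAddCommGroup E] [Module R E]
  {π : G →* (E ≃ₗᵢ[R] E)} {b : G → E}

theorem map_one (hb : IsOneCocycle π b) : b 1 = 0 := by
  simpa using hb 1 1

theorem apply_eq_neg_apply_inv (hb : IsOneCocycle π b) (g : G) : b g = -π g (b g⁻¹) := by
  have h := hb g g⁻¹
  rw [mul_inv_cancel, hb.map_one] at h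
  exact eq_neg_of_add_eq_zero_left h.symm

theorem norm_le_of_mem_pow (hb : IsOneCocycle π b) {S : Set G} {M : ℝ}
    (hM : ∀ s ∈ S, ‖b s‖ ≤ M) : ∀ (n : ℕ), ∀ g ∈ S ^ n, ‖b g‖ ≤ n * M
  | 0, g, hg => by
    rw [pow_zero, Set.mem_one] at hg
    simp [hg, hb.map_one]
  | n + 1, _, ⟨a, ha, s, hs, rfl⟩ => calc
    ‖b (a * s)‖ ≤ ‖b a‖ + ‖π a (b s)‖ := hb a s ▸ norm_add_le _ _
    _ = ‖b a‖ + ‖b s‖ := by rw [LinearIsometryEquiv.norm_map]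
    _ ≤ n * M + M := add_le_add (hb.norm_le_of_mem_pow hM n a ha) (hM s hs)
    _ = (n + 1 : ℕ) * M := by push_cast; ring

theorem exists_norm_le_mul_wordLength [TopologicalSpace G] (hb : IsOneCocycle π b)
    (hcont : Continuous b) {S : Set G} (hS : IsCompact S)
    (hgen : ∀ g : G, ∃ n : ℕ, g ∈ S ^ n) : ∃ M : ℝ, ∀ g, ‖b g‖ ≤ wordLength S g * M := by
  obtain ⟨M, hM⟩ := hS.exists_bound_of_continuousOn hcont.continuousOn
  exact ⟨M, fun g => hb.norm_le_of_mem_pow hM _ g (Nat.sInf_mem (hgen g))⟩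

theorem integrable_norm_pow [TopologicalSpace G] [MeasurableSpace G] [OpensMeasurableSpace G]
    [SecondCountableTopology G] (hb : IsOneCocycle π b) (hcont : Continuous b) {S : Set G}
    (hS : IsCompact S) (hgen : ∀ g : G, ∃ n : ℕ, g ∈ S ^ n) {μ : Measure G} (k : ℕ)
    (hμ : Integrable (fun g => (wordLength S g : ℝ) ^ k) μ) :
    Integrable (fun g => ‖b g‖ ^ k) μ := by
  obtain ⟨M, hM⟩ := hb.exists_norm_le_mul_wordLength hcont hS hgen
  refine (hμ.mul_const (M ^ k)).mono' (hcont.norm.pow k).aestronglyMeasurable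
    (Filter.Eventually.of_forall fun g => ?_)
  rw [Real.norm_of_nonneg (by positivity), ← mul_pow]
  exact pow_le_pow_left₀ (norm_nonneg _) (hM g) k

theorem integrable [TopologicalSpace G] [MeasurableSpace G] [OpensMeasurableSpace G]
    [SecondCountableTopology G] (hb : IsOneCocycle π b) (hcont : Continuous b) {S : Set G}
    (hS : IsCompact S) (hgen : ∀ g : G, ∃ n : ℕ, g ∈ S ^ n) {μ : Measure G}
    (hμ : Integrable (fun g => (wordLength S g : ℝ)) μ) : Integrable b μ :=
  (integrable_norm_iff hcont.aestronglyMeasurable).mp <| by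
    simpa using hb.integrable_norm_pow hcont hS hgen 1 (by simpa using hμ)

end NormedGroup

theorem norm_mul_sq {G H : Type*} [Group G] [NormedAddCommGroup H] [InnerProductSpace ℝ H]
    {π : G →* (H ≃ₗᵢ[ℝ] H)} {b : G → H} (hb : IsOneCocycle π b) (g h : G) :
    ‖b (g * h)‖ ^ 2 = ‖b g‖ ^ 2 + ‖b h‖ ^ 2 - 2 * ⟪b g⁻¹, b h⟫ := by
  have hcross : ⟪b g, π g (b h)⟫ = -⟪b g⁻¹, b h⟫ := by
    rw [hb.apply_eq_neg_apply_inv g, inner_neg_left, LinearIsometryEquiv.inner_map_map]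
  rw [hb g h, norm_add_sq_real, LinearIsometryEquiv.norm_map, hcross]
  ring

end IsOneCocycle

theorem CohomologicallyAdapted.integrable_wordLength_pow {G : Type*} [Group G]
    [TopologicalSpace G] [IsTopologicalGroup G] [LocallyCompactSpace G] [MeasurableSpace G]
    [BorelSpace G] {S : Set G} {μ : Measure G} (hμ : CohomologicallyAdapted S μ) (k : ℕ) :
    Integrable (fun g => (wordLength S g : ℝ) ^ k) μ := by
  rcases k with _ | k
  · have := hμ.isProb
    simp
  · simpa only [Real.rpow_natCast] using hμ.finiteMoments (k + 1 : ℕ) (by simp)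

theorem integral_mconv {G E : Type*} [Monoid G] [MeasurableSpace G] [MeasurableMul₂ G]
    [NormedAddCommGroup E] [NormedSpace ℝ E] {μ ν : Measure G} {f : G → E}
    (hf : AEStronglyMeasurable f (mconv μ ν)) :
    ∫ g, f g ∂(mconv μ ν) = ∫ q, f (q.1 * q.2) ∂(μ.prod ν) :=
  integral_map measurable_mul.aemeasurable hf

section InnerProd

variable {α β H : Type*} [MeasurableSpace α] [MeasurableSpace β] [NormedAddCommGroup H]
  [InnerProductSpace ℝ H] {μ : Measure α} {ν : Measure β} {f : α → H} {g : β → H}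

theorem MeasureTheory.Integrable.inner_prod (hf : Integrable f μ) (hg : Integrable g ν) :
    Integrable (fun z : α × β => ⟪f z.1, g z.2⟫) (μ.prod ν) :=
  hf.op_fst_snd (continuous_inner (𝕜 := ℝ))
    ⟨1, fun x y => by simpa using norm_inner_le_norm (𝕜 := ℝ) x y⟩ hg

theorem integral_prod_inner [CompleteSpace H] [SFinite μ] [SFinite ν] (hf : Integrable f μ)
    (hg : Integrable g ν) :
    ∫ z, ⟪f z.1, g z.2⟫ ∂(μ.prod ν) = ⟪∫ x, f x ∂μ, ∫ y, g y ∂ν⟫ := by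
  rw [integral_prod _ (hf.inner_prod hg)]
  simp_rw [integral_inner hg]
  simp_rw [real_inner_comm (∫ y, g y ∂ν)]
  rw [integral_inner hf, real_inner_comm]

end InnerProd

open scoped RealInnerProductSpace in
theorem cocycle_convolution_identity_hilbert_general
    {G : Type*} [Group G] [TopologicalSpace G] [IsTopologicalGroup G]
    [LocallyCompactSpace G] [SecondCountableTopology G]
    [MeasurableSpace G] [BorelSpace G]
    (S : Set G) (hScpt : IsCompact S)
    (hSgen : ∀ g : G, ∃ n : ℕ, g ∈ S ^ n)
    (μ ν : MeasureTheory.Measure G)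
    (hμ : CohomologicallyAdapted S μ) (hν : CohomologicallyAdapted S ν)
    {H : Type*} [NormedAddCommGroup H] [InnerProductSpace ℝ H] [CompleteSpace H]
    (π : G →* (H ≃ₗᵢ[ℝ] H))
    (b : G → H) (hb : Continuous b)
    (hcoc : ∀ g h : G, b (g * h) = b g + π g (b h)) :
    ∫ g, ‖b g‖ ^ 2 ∂(mconv μ ν)
      = (∫ g, ‖b g‖ ^ 2 ∂μ) + (∫ g, ‖b g‖ ^ 2 ∂ν)
        - 2 * ⟪∫ g, b g ∂μ, ∫ g, b g ∂ν⟫ := by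
  have := hμ.isProb
  have := hν.isProb
  have : μ.IsInvInvariant := ⟨hμ.symmetric⟩
  have hcoc : IsOneCocycle π b := hcoc
  have hbμ := hcoc.integrable hb hScpt hSgen (by simpa using hμ.integrable_wordLength_pow 1)
  have hbν := hcoc.integrable hb hScpt hSgen (by simpa using hν.integrable_wordLength_pow 1)
  have h₁ := (hcoc.integrable_norm_pow hb hScpt hSgen 2
    (hμ.integrable_wordLength_pow 2)).comp_fst ν
  have h₂ := (hcoc.integrable_norm_pow hb hScpt hSgen 2
    (hν.integrable_wordLength_pow 2)).comp_snd μ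
  have h₃ := (hbμ.comp_inv.inner_prod hbν).const_mul 2
  rw [integral_mconv (f := fun g => ‖b g‖ ^ 2) (hb.norm.pow 2).aestronglyMeasurable]
  simp_rw [hcoc.norm_mul_sq]
  rw [integral_sub (h₁.fun_add h₂) h₃, integral_add h₁ h₂, integral_const_mul,
    integral_prod_inner hbμ.comp_inv hbν, integral_inv_eq_self,
    integral_fun_fst (fun g => ‖b g‖ ^ 2), integral_fun_snd (fun g => ‖b g‖ ^ 2)]
  simp

open scoped RealInnerProductSpace in
theorem cocycle_convolution_identity_hilbert
    {G : Type*} [Group G] [TopologicalSpace G] [IsTopologicalGroup G]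
    [LocallyCompactSpace G] [SecondCountableTopology G]
    [MeasurableSpace G] [BorelSpace G]
    (S : Set G) (hScpt : IsCompact S) (hSsymm : S⁻¹ = S)
    (hSgen : ∀ g : G, ∃ n : ℕ, g ∈ S ^ n)
    (μ ν : MeasureTheory.Measure G)
    (hμ : CohomologicallyAdapted S μ) (hν : CohomologicallyAdapted S ν)
    {H : Type*} [NormedAddCommGroup H] [InnerProductSpace ℝ H] [CompleteSpace H]
    (π : G →* (H ≃ₗᵢ[ℝ] H)) (hπ : ∀ x : H, Continuous fun g : G => π g x)
    (b : G → H) (hb : Continuous b)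
    (hcoc : ∀ g h : G, b (g * h) = b g + π g (b h)) :
    ∫ g, ‖b g‖ ^ 2 ∂(mconv μ ν)
      = (∫ g, ‖b g‖ ^ 2 ∂μ) + (∫ g, ‖b g‖ ^ 2 ∂ν)
        - 2 * ⟪∫ g, b g ∂μ, ∫ g, b g ∂ν⟫ :=
  cocycle_convolution_identity_hilbert_general S hScpt hSgen μ ν hμ hν π b hb hcoc
end
end
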